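/- Let (m_1,…,m_r) be a tuple of positive integers with m = lcm(m_1,…,m_r). Then E(m_1,…,m_r) ≠ 0 if and only if for every prime p dividing m the following hold: if p is odd then s(p) ≥ 2 (equivalently, the lcm of the m_j with any single one omitted is still m), and if p = 2 then s(2) is even, where s(p) = #{j : a_j(p) = a(p)} counts the arguments divisible by the maximal power of p dividing m. -/

import Mathlib

/-- The von Sterneck function `Φ(k,n) = μ(n/gcd(k,n)) * φ(n) / φ(n/gcd(k,n))`. -/
noncomputable def vonSterneck (k n : ℕ) : ℚ :=
  (ArithmeticFunction.moebius (n / Nat.gcd k n) : ℚ) * (Nat.totient n : ℚ) /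
    (Nat.totient (n / Nat.gcd k n) : ℚ)

/-- The orbicyclic function `E(m_1,…,m_r)`. -/
noncomputable def orbE {r : ℕ} (m : Fin r → ℕ) : ℚ :=
  (∑ k ∈ Finset.Icc 1 (Finset.univ.lcm m), ∏ j, vonSterneck k (m j)) /
    ((Finset.univ.lcm m : ℕ) : ℚ)

/-- The polynomial `h_s(x) = ((x-1)^(s-1) + (-1)^s)/x`. -/
noncomputable def hpoly (s : ℕ) (x : ℚ) : ℚ := ((x - 1) ^ (s - 1) + (-1) ^ s) / x

open Finset

/-!
Truncating every `m j` to `gcd (m j) N` makes `N ↦ ∑_{k<N} ∏_j Φ(k, gcd (m j) N)` a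
multiplicative function of `N`: `Φ(k, ·)` is multiplicative and, by the Chinese remainder
theorem, the sum over `k < a * b` splits into a product of sums over `k < a` and `k < b`.
At `N = lcm m` this function is `lcm m * E(m)`, so `E(m) ≠ 0` iff every local factor at
`p ^ A ∥ lcm m` is nonzero. In the local sum over `k < p ^ A` only the multiples of
`p ^ (A - 1)` survive, and it is a nonzero multiple of `(p - 1) ^ s + (p - 1) * (-1) ^ s`,
`s = s(p)`, which vanishes exactly when `s` is odd and either `s = 1` or `p = 2`.
-/

theorem sum_Icc_one_eq_sum_range {M : Type*} [AddCommMonoid M] (f : ℕ → M) {n : ℕ}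
    (h : f n = f 0) : ∑ k ∈ Icc 1 n, f k = ∑ k ∈ range n, f k := by
  cases n with
  | zero => simp
  | succ n =>
    rw [sum_range_succ', ← h, ← Finset.Ico_add_one_right_eq_Icc, sum_Ico_succ_top (by omega),
      sum_Ico_eq_sum_range]
    simp [add_comm]

theorem sum_range_mul_eq_sum_range_of_not_dvd {M : Type*} [AddCommMonoid M] {d : ℕ}
    (hd : 0 < d) (n : ℕ) {f : ℕ → M} (hf : ∀ k, ¬ d ∣ k → f k = 0) :
    ∑ k ∈ range (d * n), f k = ∑ t ∈ range n, f (d * t) := by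
  rw [← sum_image fun x _ y _ h => Nat.eq_of_mul_eq_mul_left hd h]
  refine (sum_subset (fun k hk => ?_) fun k hk hk' => hf k fun ⟨t, ht⟩ => hk' ?_).symm
  · obtain ⟨t, ht, rfl⟩ := mem_image.1 hk
    exact mem_range.2 (Nat.mul_lt_mul_of_pos_left (mem_range.1 ht) hd)
  · subst ht
    exact mem_image.2 ⟨t, mem_range.2 (Nat.lt_of_mul_lt_mul_left (mem_range.1 hk)), rfl⟩

theorem Nat.Coprime.sum_range_mul {R : Type*} [CommSemiring R] {a b : ℕ} (hab : a.Coprime b)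
    (f g : ℕ → R) :
    ∑ k ∈ range (a * b), f (k % a) * g (k % b) = (∑ x ∈ range a, f x) * ∑ y ∈ range b, g y := by
  have hinj : Set.InjOn (fun k => (k % a, k % b)) (range (a * b)) := by
    intro x hx y hy hxy
    simp only [Prod.mk.injEq] at hxy
    exact ((Nat.modEq_and_modEq_iff_modEq_mul hab).1 hxy).eq_of_lt_of_lt
      (mem_range.1 hx) (mem_range.1 hy)
  have himage : (range (a * b)).image (fun k => (k % a, k % b)) = range a ×ˢ range b := by
    refine eq_of_subset_of_card_le (fun x hx => ?_) ?_
    · obtain ⟨k, hk, rfl⟩ := mem_image.1 hx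
      have hab0 := (zero_le k).trans_lt (mem_range.1 hk)
      exact mem_product.2 ⟨mem_range.2 (Nat.mod_lt _ (Nat.pos_of_mul_pos_right hab0)),
        mem_range.2 (Nat.mod_lt _ (Nat.pos_of_mul_pos_left hab0))⟩
    · rw [Finset.card_image_of_injOn hinj, card_product, card_range, card_range, card_range]
  rw [sum_mul_sum, ← sum_product', ← himage, sum_image hinj]

theorem Nat.gcd_prime_pow_of_factorization_le {n p e : ℕ} (hp : p.Prime) (hn : n ≠ 0)
    (h : n.factorization p ≤ e) : n.gcd (p ^ e) = p ^ n.factorization p := by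
  conv_lhs => rw [← Nat.ordProj_mul_ordCompl_eq_self n p]
  rw [Nat.Coprime.gcd_mul_right_cancel _ ((Nat.coprime_ordCompl hp hn).symm.pow_right e),
    Nat.gcd_eq_left (pow_dvd_pow p h)]

theorem Nat.factorization_finset_lcm_apply {ι : Type*} {s : Finset ι} {f : ι → ℕ}
    (hf : ∀ i ∈ s, f i ≠ 0) (p : ℕ) :
    (s.lcm f).factorization p = s.sup fun i => (f i).factorization p := by
  classical
  induction s using Finset.induction_on with
  | empty => simp
  | insert i s _ ih =>
    have hs : s.lcm f ≠ 0 :=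
      Finset.lcm_eq_zero_iff.not.2 fun ⟨j, hj, h0⟩ => hf j (mem_insert_of_mem hj) h0
    rw [lcm_insert, lcm_eq_nat_lcm, sup_insert,
      Nat.factorization_lcm (hf i (mem_insert_self i s)) hs, Finsupp.sup_apply,
      ih fun j hj => hf j (mem_insert_of_mem hj)]

theorem pow_add_mul_neg_one_pow_eq_zero_iff {R : Type*} [CommRing R] [LinearOrder R]
    [IsStrictOrderedRing R] {x : R} (hx : 1 ≤ x) {s : ℕ} (hs : s ≠ 0) :
    x ^ s + x * (-1) ^ s = 0 ↔ Odd s ∧ (s = 1 ∨ x = 1) := by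
  obtain ⟨t, rfl⟩ := Nat.exists_eq_add_one_of_ne_zero hs
  rcases Nat.even_or_odd (t + 1) with he | ho
  · rw [he.neg_one_pow, mul_one, iff_false_intro (Nat.not_odd_iff_even.2 he), false_and,
      iff_false]
    have : 0 < x := by linarith
    positivity
  · have hx0 : x ≠ 0 := by positivity
    rw [ho.neg_one_pow, show x ^ (t + 1) + x * -1 = x * (x ^ t - 1) by ring, mul_eq_zero,
      sub_eq_zero, or_iff_right hx0, Nat.add_eq_right, and_iff_right ho]
    rcases eq_or_ne t 0 with rfl | ht
    · simp
    · rw [pow_eq_one_iff_of_nonneg (by linarith) ht]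
      simp [ht]

theorem vonSterneck_of_dvd {k n : ℕ} (h : n ∣ k) : vonSterneck k n = n.totient := by
  rcases eq_or_ne n 0 with rfl | hn
  · simp [vonSterneck]
  · simp [vonSterneck, Nat.gcd_eq_right h, Nat.div_self (Nat.pos_of_ne_zero hn)]

theorem vonSterneck_mod_of_dvd {k n N : ℕ} (h : n ∣ N) :
    vonSterneck (k % N) n = vonSterneck k n := by
  rw [vonSterneck, vonSterneck, Nat.gcd_comm, Nat.gcd_rec n, Nat.mod_mod_of_dvd _ h,
    ← Nat.gcd_rec, Nat.gcd_comm]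

theorem vonSterneck_mul_of_coprime (k : ℕ) {a b : ℕ} (h : a.Coprime b) :
    vonSterneck k (a * b) = vonSterneck k a * vonSterneck k b := by
  have ha := Nat.gcd_dvd_right k a
  have hb := Nat.gcd_dvd_right k b
  have hcop : (a / k.gcd a).Coprime (b / k.gcd b) :=
    (h.coprime_div_left ha).coprime_div_right hb
  rw [vonSterneck, vonSterneck, vonSterneck, h.gcd_mul k, ← Nat.div_mul_div_comm ha hb,
    ArithmeticFunction.isMultiplicative_moebius.map_mul_of_coprime hcop, Nat.totient_mul h,
    Nat.totient_mul hcop]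
  push_cast
  ring

theorem vonSterneck_prime_pow_of_not_dvd {p e k : ℕ} (hp : p.Prime) (hk : ¬ p ^ (e - 1) ∣ k) :
    vonSterneck k (p ^ e) = 0 := by
  obtain ⟨w, hwe, hg⟩ := (Nat.dvd_prime_pow hp).1 (Nat.gcd_dvd_right k (p ^ e))
  have hw : w + 2 ≤ e := by
    by_contra! hlt
    exact hk ((pow_dvd_pow p (by omega)).trans (hg ▸ Nat.gcd_dvd_left k (p ^ e)))
  rw [vonSterneck, hg, Nat.pow_div hwe hp.pos,
    ArithmeticFunction.moebius_apply_prime_pow hp (by omega), if_neg (by omega)]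
  simp

theorem vonSterneck_prime_pow_of_dvd_of_not_dvd {p e k : ℕ} (hp : p.Prime)
    (hk : p ^ (e - 1) ∣ k) (hk' : ¬ p ^ e ∣ k) :
    vonSterneck k (p ^ e) = -(p : ℚ) ^ (e - 1) := by
  obtain ⟨w, hwe, hg⟩ := (Nat.dvd_prime_pow hp).1 (Nat.gcd_dvd_right k (p ^ e))
  have hw : w = e - 1 := by
    have h1 : p ^ (e - 1) ∣ p ^ w := hg ▸ Nat.dvd_gcd hk (pow_dvd_pow p (Nat.sub_le e 1))
    have h2 : w ≠ e := fun h => hk' (h ▸ hg ▸ Nat.gcd_dvd_left k (p ^ e))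
    have := (Nat.pow_dvd_pow_iff_le_right hp.one_lt).1 h1
    omega
  have he : e ≠ 0 := by rintro rfl; exact hk' (one_dvd k)
  have hp1 : ((p - 1 : ℕ) : ℚ) ≠ 0 := Nat.cast_ne_zero.2 (Nat.sub_ne_zero_of_lt hp.one_lt)
  rw [vonSterneck, hg, hw, Nat.pow_div (Nat.sub_le e 1) hp.pos, Nat.sub_sub_self (by omega),
    pow_one, ArithmeticFunction.moebius_apply_prime hp, Nat.totient_prime hp,
    Nat.totient_prime_pow hp (by omega), div_eq_iff hp1]
  push_cast
  ring

theorem sum_range_prod_vonSterneck_prime_pow {ι : Type*} [Fintype ι] {p : ℕ} (hp : p.Prime)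
    {a : ι → ℕ} {A : ℕ} (hA : A ≠ 0) (hle : ∀ j, a j ≤ A) (hex : ∃ j, a j = A) :
    ∑ k ∈ range (p ^ A), ∏ j, vonSterneck k (p ^ a j) =
      ((p : ℚ) ^ (A - 1)) ^ #{j | a j = A} * (∏ j with a j ≠ A, ((p ^ a j).totient : ℚ)) *
        (((p : ℚ) - 1) ^ #{j | a j = A} + ((p : ℚ) - 1) * (-1) ^ #{j | a j = A}) := by
  obtain ⟨J, hJ⟩ := hex
  set s := #{j | a j = A}
  set Q := ∏ j with a j ≠ A, ((p ^ a j).totient : ℚ)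
  have hpA : p ^ A = p ^ (A - 1) * p := by rw [← pow_succ, Nat.sub_add_cancel (by omega)]
  have hzero : ∏ j, vonSterneck 0 (p ^ a j) = ((p : ℚ) ^ (A - 1) * (p - 1)) ^ s * Q := by
    simp_rw [vonSterneck_of_dvd (dvd_zero _)]
    rw [← prod_filter_mul_prod_filter_not univ (a · = A),
      prod_congr rfl fun j hj => by rw [(mem_filter.1 hj).2], prod_const,
      Nat.totient_prime_pow hp (Nat.pos_of_ne_zero hA)]
    push_cast [Nat.cast_sub hp.one_le]
    rfl
  have hunit : ∀ t ∈ Ico 1 p,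
      ∏ j, vonSterneck (p ^ (A - 1) * t) (p ^ a j) = (-(p : ℚ) ^ (A - 1)) ^ s * Q := by
    intro t ht
    have htp : ¬ p ^ A ∣ p ^ (A - 1) * t := by
      rw [hpA]
      exact fun h => Nat.not_dvd_of_pos_of_lt (mem_Ico.1 ht).1 (mem_Ico.1 ht).2
        (Nat.dvd_of_mul_dvd_mul_left (pow_pos hp.pos _) h)
    have hterm : ∀ j, vonSterneck (p ^ (A - 1) * t) (p ^ a j) =
        if a j = A then -(p : ℚ) ^ (A - 1) else ((p ^ a j).totient : ℚ) := by
      intro j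
      split_ifs with h
      · rw [h]
        exact vonSterneck_prime_pow_of_dvd_of_not_dvd hp (dvd_mul_right _ _) htp
      · exact vonSterneck_of_dvd
          (dvd_mul_of_dvd_left (pow_dvd_pow p (by have := hle j; omega)) t)
    rw [prod_congr rfl fun j _ => hterm j, prod_ite, prod_const]
  rw [hpA, sum_range_mul_eq_sum_range_of_not_dvd (pow_pos hp.pos _) p
      fun k hk => prod_eq_zero (mem_univ J) (vonSterneck_prime_pow_of_not_dvd hp (hJ ▸ hk)),
    range_eq_Ico, sum_eq_sum_Ico_succ_bot hp.pos, mul_zero, hzero, sum_congr rfl hunit,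
    sum_const, Nat.card_Ico, nsmul_eq_mul, Nat.cast_pred hp.pos, mul_pow, neg_pow]
  ring

theorem sum_range_prod_vonSterneck_prime_pow_ne_zero_iff {ι : Type*} [Fintype ι] {p : ℕ}
    (hp : p.Prime) {a : ι → ℕ} {A : ℕ} (hA : A ≠ 0) (hle : ∀ j, a j ≤ A) (hex : ∃ j, a j = A) :
    ∑ k ∈ range (p ^ A), ∏ j, vonSterneck k (p ^ a j) ≠ 0 ↔
      (Odd p → 2 ≤ #{j | a j = A}) ∧ (p = 2 → Even #{j | a j = A}) := by
  have hs : #{j | a j = A} ≠ 0 := by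
    obtain ⟨J, hJ⟩ := hex
    exact card_ne_zero.2 ⟨J, by simp [hJ]⟩
  have hQ : ∏ j with a j ≠ A, ((p ^ a j).totient : ℚ) ≠ 0 :=
    prod_ne_zero_iff.2 fun j _ => by exact_mod_cast (Nat.totient_pos.2 (pow_pos hp.pos _)).ne'
  have hp1 : (1 : ℚ) ≤ p - 1 := by
    have : (2 : ℚ) ≤ p := by exact_mod_cast hp.two_le
    linarith
  rw [sum_range_prod_vonSterneck_prime_pow hp hA hle hex, mul_ne_zero_iff,
    and_iff_right (mul_ne_zero (pow_ne_zero _ (pow_ne_zero _ (Nat.cast_ne_zero.2 hp.ne_zero))) hQ),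
    ne_eq, pow_add_mul_neg_one_pow_eq_zero_iff hp1 hs, sub_eq_iff_eq_add, one_add_one_eq_two]
  have hp2 : (p : ℚ) = 2 ↔ p = 2 := by exact_mod_cast Iff.rfl
  have hodd := hp.eq_two_or_odd
  rw [hp2]
  simp only [Nat.odd_iff, Nat.even_iff]
  omega

noncomputable def vonSterneckSum {ι : Type*} [Fintype ι] (m : ι → ℕ) (N : ℕ) : ℚ :=
  ∑ k ∈ range N, ∏ j, vonSterneck k ((m j).gcd N)

section vonSterneckSum

variable {ι : Type*} [Fintype ι] (m : ι → ℕ)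

theorem vonSterneckSum_one : vonSterneckSum m 1 = 1 := by
  simp [vonSterneckSum, vonSterneck_of_dvd]

theorem vonSterneckSum_mul {a b : ℕ} (h : a.Coprime b) :
    vonSterneckSum m (a * b) = vonSterneckSum m a * vonSterneckSum m b := by
  rw [vonSterneckSum, vonSterneckSum, vonSterneckSum, ← h.sum_range_mul]
  refine sum_congr rfl fun k _ => ?_
  rw [← prod_mul_distrib]
  refine prod_congr rfl fun j _ => ?_
  rw [h.gcd_mul (m j), vonSterneck_mul_of_coprime k (h.gcd_both (m j) (m j)),
    vonSterneck_mod_of_dvd (Nat.gcd_dvd_right _ _),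
    vonSterneck_mod_of_dvd (Nat.gcd_dvd_right _ _)]

variable {m}

theorem vonSterneckSum_prime_pow {p e : ℕ} (hp : p.Prime) (hm : ∀ j, m j ≠ 0)
    (he : ∀ j, (m j).factorization p ≤ e) :
    vonSterneckSum m (p ^ e) =
      ∑ k ∈ range (p ^ e), ∏ j, vonSterneck k (p ^ (m j).factorization p) := by
  simp only [vonSterneckSum, Nat.gcd_prime_pow_of_factorization_le hp (hm _) (he _)]

theorem vonSterneckSum_prime_pow_factorization_lcm_ne_zero_iff (hm : ∀ j, m j ≠ 0) {p : ℕ}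
    (hp : p.Prime) (hpM : p ∣ univ.lcm m) :
    vonSterneckSum m (p ^ (univ.lcm m).factorization p) ≠ 0 ↔
      (Odd p → 2 ≤ #{j | (m j).factorization p = (univ.lcm m).factorization p}) ∧
        (p = 2 → Even #{j | (m j).factorization p = (univ.lcm m).factorization p}) := by
  have hM : univ.lcm m ≠ 0 := Finset.lcm_eq_zero_iff.not.2 fun ⟨j, _, hj⟩ => hm j hj
  have hA := (hp.factorization_pos_of_dvd hM hpM).ne'
  have hsup := Nat.factorization_finset_lcm_apply (s := univ) (fun j _ => hm j) p
  have hle : ∀ j, (m j).factorization p ≤ (univ.lcm m).factorization p :=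
    fun j => hsup ▸ le_sup (f := fun j => (m j).factorization p) (mem_univ j)
  have hι : (univ : Finset ι).Nonempty :=
    nonempty_iff_ne_empty.2 fun h => hA (by rw [hsup, h, sup_empty, bot_eq_zero])
  obtain ⟨J, -, hJ⟩ := exists_mem_eq_sup univ hι fun j => (m j).factorization p
  rw [vonSterneckSum_prime_pow hp hm hle]
  exact sum_range_prod_vonSterneck_prime_pow_ne_zero_iff hp hA hle ⟨J, (hsup.trans hJ).symm⟩

end vonSterneckSum

theorem orbE_eq_vonSterneckSum_div {r : ℕ} (m : Fin r → ℕ) :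
    orbE m = vonSterneckSum m (univ.lcm m) / univ.lcm m := by
  rw [orbE, vonSterneckSum, sum_Icc_one_eq_sum_range]
  · simp only [Nat.gcd_eq_left (dvd_lcm (mem_univ _))]
  · refine prod_congr rfl fun j _ => ?_
    rw [← vonSterneck_mod_of_dvd (dvd_lcm (mem_univ j)), Nat.mod_self]

theorem orbE_ne_zero_iff {r : ℕ} (m : Fin r → ℕ) (hm : ∀ j, 0 < m j) :
    orbE m ≠ 0 ↔
      ∀ p : ℕ, p.Prime → p ∣ Finset.univ.lcm m →
        (Odd p → 2 ≤ (Finset.univ.filter fun j =>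
            (m j).factorization p = (Finset.univ.lcm m).factorization p).card) ∧
        (p = 2 → Even (Finset.univ.filter fun j =>
            (m j).factorization p = (Finset.univ.lcm m).factorization p).card) := by
  have hm0 : ∀ j, m j ≠ 0 := fun j => (hm j).ne'
  have hM : univ.lcm m ≠ 0 := Finset.lcm_eq_zero_iff.not.2 fun ⟨j, _, hj⟩ => hm0 j hj
  rw [orbE_eq_vonSterneckSum_div, div_ne_zero_iff, and_iff_left (Nat.cast_ne_zero.2 hM),
    Nat.multiplicative_factorization _ (fun _ _ => vonSterneckSum_mul m) (vonSterneckSum_one m)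
      hM,
    Finsupp.prod_ne_zero_iff, Nat.support_factorization]
  refine forall_congr' fun p => ?_
  rw [Nat.mem_primeFactors_of_ne_zero hM, and_imp]
  exact imp_congr_right fun hp => imp_congr_right fun hpM =>
    vonSterneckSum_prime_pow_factorization_lcm_ne_zero_iff hm0 hp hpM
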